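/- arXiv:1612.00499 — 4 statements merged into one kernel-verified Lean document; each statement's English description precedes it below -/
import Mathlib

section
/- Let $A$ be a real $n \times n$ matrix, $B$ a real $n \times \ell$ matrix, $C$ a real $s \times n$ matrix. Let $V$ be a real $n \times q$ matrix with $V^T V = I_q$, $W$ a real $n \times p$ matrix with $W^T W = I_p$ and $V^T W = 0$. Let $\mathcal{T} = V^T A^T V$, let $E$ be the $q \times p$ matrix consisting of the last $p$ columns of $I_q$, and let $H$ be a $p \times p$ matrix such that the Arnoldi-type relation $A^T V = V \mathcal{T} + W H E^T$ holds. Assume $C^T = V G$ for some $q \times s$ matrix $G$, and set $B_q = V^T B$. Let $Y : \mathbb{R} \to \mathbb{R}^{q \times q}$ be differentiable and satisfy the projected differential Riccati equation $\dot{Y}(t) = \mathcal{T} Y(t) + Y(t) \mathcal{T}^T - Y(t) B_q B_q^T Y(t) + G G^T$ for all $t$. Define $X_m(t) = V Y(t) V^T$ and the residual $R_m(t) = \dot{X}_m(t) - A^T X_m(t) - X_m(t) A + X_m(t) B B^T X_m(t) - C^T C$. Then for every $t$, $R_m(t) = -\big( V\, Y(t) E H^T\, W^T + W\, H E^T Y(t)\,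 V^T \big)$; equivalently, $R_m(t) = [V\ W] \begin{pmatrix} 0 & -Y(t) E H^T \\ -H E^T Y(t) & 0 \end{pmatrix} [V\ W]^T$. -/
/-!
Since `Cᵀ = V G` and `B_q = Vᵀ B`, conjugation by `V` carries the constant term `G Gᵀ` and the
quadratic term `Y B_q B_qᵀ Y` of the projected equation exactly onto `Cᵀ C` and `X B Bᵀ X`.
In the linear terms, `Aᵀ V` differs from `V T` only by the Arnoldi remainder `W H Eᵀ`, and this
remainder (with its transpose) is the whole residual.
-/

open scoped Matrix

attribute [local instance] Matrix.normedAddCommGroup Matrix.normedSpace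

open Matrix

theorem HasDerivAt.matrix_mul_mul {𝕜 : Type*} [NontriviallyNormedField 𝕜] [CompleteSpace 𝕜]
    {k m n o : Type*} [Fintype k] [Fintype m] [Fintype n] [Fintype o]
    {Y : 𝕜 → Matrix m n 𝕜} {Y' : Matrix m n 𝕜} {t : 𝕜}
    (hY : HasDerivAt Y Y' t) (P : Matrix k m 𝕜) (Q : Matrix n o 𝕜) :
    HasDerivAt (fun t => P * Y t * Q) (P * Y' * Q) t :=
  ((mulRightLinearMap k 𝕜 Q ∘ₗ mulLeftLinearMap n 𝕜 P).toContinuousLinearMap.hasFDerivAt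
    ).comp_hasDerivAt t hY

section Riccati

variable {R : Type*} [CommRing R]
  {k m a b c : Type*} [Fintype k] [Fintype m] [Fintype a] [Fintype b] [Fintype c]

def riccatiOperator (A : Matrix k k R) (B : Matrix k b R) (C : Matrix c k R)
    (X : Matrix k k R) : Matrix k k R :=
  Aᵀ * X + X * A - X * B * Bᵀ * X + Cᵀ * C

theorem conj_riccatiOperator_sub_of_arnoldi (A : Matrix k k R) (B : Matrix k b R)
    (C : Matrix c k R) (V : Matrix k m R) (W : Matrix k a R) (T : Matrix m m R)
    (E : Matrix m a R) (H : Matrix a a R) (G : Matrix m c R) (Y : Matrix m m R)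
    (hArnoldi : Aᵀ * V = V * T + W * H * Eᵀ) (hC : Cᵀ = V * G) :
    V * riccatiOperator Tᵀ (Vᵀ * B) Gᵀ Y * Vᵀ - riccatiOperator A B C (V * Y * Vᵀ) =
      -(V * (Y * E * Hᵀ) * Wᵀ + W * (H * Eᵀ * Y) * Vᵀ) := by
  have hVA : Vᵀ * A = Tᵀ * Vᵀ + E * Hᵀ * Wᵀ := by
    simpa [transpose_mul, Matrix.mul_assoc] using congrArg transpose hArnoldi
  have hAX : Aᵀ * (V * Y * Vᵀ) = (V * T + W * H * Eᵀ) * Y * Vᵀ := by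
    rw [← hArnoldi]; simp only [Matrix.mul_assoc]
  have hXA : V * Y * Vᵀ * A = V * Y * (Tᵀ * Vᵀ + E * Hᵀ * Wᵀ) := by
    rw [← hVA]; simp only [Matrix.mul_assoc]
  have hCC : Cᵀ * C = V * (G * Gᵀ) * Vᵀ := by
    rw [← transpose_transpose C, transpose_transpose Cᵀ, hC, transpose_mul]
    simp only [Matrix.mul_assoc]
  rw [riccatiOperator, riccatiOperator, hAX, hXA, hCC]
  simp only [transpose_transpose, transpose_mul, Matrix.mul_add, Matrix.add_mul,
    Matrix.mul_sub, Matrix.sub_mul, Matrix.mul_assoc]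
  abel

end Riccati

theorem fromCols_mul_fromBlocks_antidiag_mul_transpose {R : Type*}
    [Semiring R] {k m a : Type*} [Fintype m] [Fintype a]
    (V : Matrix k m R) (W : Matrix k a R) (M : Matrix m a R) (N : Matrix a m R) :
    fromCols V W * fromBlocks 0 M N 0 * (fromCols V W)ᵀ = V * M * Wᵀ + W * N * Vᵀ := by
  rw [transpose_fromCols, fromCols_mul_fromBlocks, fromCols_mul_fromRows]
  simp only [Matrix.mul_zero, zero_add, add_zero]
  exact add_comm _ _

theorem residual_formula_extended_block_arnoldi_general
    {n l s q p : ℕ}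
    (A : Matrix (Fin n) (Fin n) ℝ) (B : Matrix (Fin n) (Fin l) ℝ)
    (C : Matrix (Fin s) (Fin n) ℝ)
    (V : Matrix (Fin n) (Fin q) ℝ) (W : Matrix (Fin n) (Fin p) ℝ)
    (T : Matrix (Fin q) (Fin q) ℝ)
    (E : Matrix (Fin q) (Fin p) ℝ)
    (H : Matrix (Fin p) (Fin p) ℝ)
    (hArnoldi : Aᵀ * V = V * T + W * H * Eᵀ)
    (G : Matrix (Fin q) (Fin s) ℝ) (hC : Cᵀ = V * G)
    (Bq : Matrix (Fin q) (Fin l) ℝ) (hBq : Bq = Vᵀ * B)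
    (Y Y' : ℝ → Matrix (Fin q) (Fin q) ℝ)
    (hY : ∀ t, HasDerivAt Y (Y' t) t)
    (hode : ∀ t, Y' t = T * Y t + Y t * Tᵀ - Y t * Bq * Bqᵀ * Y t + G * Gᵀ)
    (Xm : ℝ → Matrix (Fin n) (Fin n) ℝ) (hXm : ∀ t, Xm t = V * Y t * Vᵀ)
    (Rm : ℝ → Matrix (Fin n) (Fin n) ℝ)
    (hRm : ∀ t, Rm t =
      deriv Xm t - Aᵀ * Xm t - Xm t * A + Xm t * B * Bᵀ * Xm t - Cᵀ * C) :
    ∀ t, Rm t = -(V * (Y t * E * Hᵀ) * Wᵀ + W * (H * Eᵀ * Y t) * Vᵀ) ∧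
      Rm t = Matrix.fromCols V W *
        Matrix.fromBlocks 0 (-(Y t * E * Hᵀ)) (-(H * Eᵀ * Y t)) 0 *
        (Matrix.fromCols V W)ᵀ := by
  intro t
  have hXm_deriv : deriv Xm t = V * Y' t * Vᵀ := by
    rw [funext hXm]
    exact ((hY t).matrix_mul_mul V Vᵀ).deriv
  have hY'_eq : Y' t = riccatiOperator Tᵀ (Vᵀ * B) Gᵀ (Y t) := by
    rw [hode, ← hBq, riccatiOperator, transpose_transpose, transpose_transpose]
  have hRm_eq : Rm t = V * Y' t * Vᵀ - riccatiOperator A B C (Xm t) := by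
    rw [hRm, hXm_deriv, riccatiOperator]
    abel
  have hresidual : Rm t = -(V * (Y t * E * Hᵀ) * Wᵀ + W * (H * Eᵀ * Y t) * Vᵀ) := by
    rw [hRm_eq, hY'_eq, hXm, conj_riccatiOperator_sub_of_arnoldi A B C V W T E H G _ hArnoldi hC]
  refine ⟨hresidual, ?_⟩
  rw [hresidual, fromCols_mul_fromBlocks_antidiag_mul_transpose, Matrix.mul_neg, Matrix.neg_mul,
    Matrix.mul_neg, Matrix.neg_mul, neg_add]

/-- In the extended block Arnoldi setting, if `Y` solves the
projected differential Riccati equation, then the residual of `Xₘ(t) = V Y(t) Vᵀ`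
for the full differential Riccati equation is
`Rₘ(t) = -(V (Y(t) E Hᵀ) Wᵀ + W (H Eᵀ Y(t)) Vᵀ)`, equivalently
`Rₘ(t) = [V W] [[0, -Y(t) E Hᵀ], [-H Eᵀ Y(t), 0]] [V W]ᵀ`. -/
theorem residual_formula_extended_block_arnoldi
    {n l s q p : ℕ} (hpq : p ≤ q)
    (A : Matrix (Fin n) (Fin n) ℝ) (B : Matrix (Fin n) (Fin l) ℝ)
    (C : Matrix (Fin s) (Fin n) ℝ)
    (V : Matrix (Fin n) (Fin q) ℝ) (W : Matrix (Fin n) (Fin p) ℝ)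
    (hV : Vᵀ * V = 1) (hW : Wᵀ * W = 1) (hVW : Vᵀ * W = 0)
    (T : Matrix (Fin q) (Fin q) ℝ) (hT : T = Vᵀ * Aᵀ * V)
    (E : Matrix (Fin q) (Fin p) ℝ)
    (hE : ∀ i j, E i j = if (i : ℕ) = q - p + (j : ℕ) then 1 else 0)
    (H : Matrix (Fin p) (Fin p) ℝ)
    (hArnoldi : Aᵀ * V = V * T + W * H * Eᵀ)
    (G : Matrix (Fin q) (Fin s) ℝ) (hC : Cᵀ = V * G)
    (Bq : Matrix (Fin q) (Fin l) ℝ) (hBq : Bq = Vᵀ * B)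
    (Y Y' : ℝ → Matrix (Fin q) (Fin q) ℝ)
    (hY : ∀ t, HasDerivAt Y (Y' t) t)
    (hode : ∀ t, Y' t = T * Y t + Y t * Tᵀ - Y t * Bq * Bqᵀ * Y t + G * Gᵀ)
    (Xm : ℝ → Matrix (Fin n) (Fin n) ℝ) (hXm : ∀ t, Xm t = V * Y t * Vᵀ)
    (Rm : ℝ → Matrix (Fin n) (Fin n) ℝ)
    (hRm : ∀ t, Rm t =
      deriv Xm t - Aᵀ * Xm t - Xm t * A + Xm t * B * Bᵀ * Xm t - Cᵀ * C) :
    ∀ t, Rm t = -(V * (Y t * E * Hᵀ) * Wᵀ + W * (H * Eᵀ * Y t) * Vᵀ) ∧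
      Rm t = Matrix.fromCols V W *
        Matrix.fromBlocks 0 (-(Y t * E * Hᵀ)) (-(H * Eᵀ * Y t)) 0 *
        (Matrix.fromCols V W)ᵀ :=
  residual_formula_extended_block_arnoldi_general A B C V W T E H hArnoldi G hC Bq hBq Y Y' hY hode
    Xm hXm Rm hRm
end

section
/- Let $A$ be a real $n \times n$ matrix, $B$ a real $n \times \ell$ matrix, $C$ a real $s \times n$ matrix. Let $V$ be a real $n \times q$ matrix with $V^T V = I_q$, $W$ a real $n \times p$ matrix with $W^T W = I_p$ and $V^T W = 0$. Let $\mathcal{T} = V^T A^T V$, let $E$ be the $q \times p$ matrix of the last $p$ columns of $I_q$, and let $H$ be a $p \times p$ matrix with $A^T V = V \mathcal{T} + W H E^T$. Assume $C^T = V G$ for some $q \times s$ matrix $G$, set $B_q = V^T B$, and let $Y : \mathbb{R} \to \mathbb{R}^{q \times q}$ be differentiable satisfying $\dot{Y}(t) = \mathcal{T} Y(t) + Y(t) \mathcal{T}^T - Y(t) B_q B_q^T Y(t) + G G^T$. Define $X_m(t) = V Y(t) V^T$ and $F = V E H^T W^T$. Then $X_m$ is an exact solution of the perturbed differential Riccati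 equation: for every $t$, $\dot{X}_m(t) = (A - F)^T X_m(t) + X_m(t) (A - F) - X_m(t) B B^T X_m(t) + C^T C$. -/
open scoped Matrix

attribute [local instance] Matrix.normedAddCommGroup Matrix.normedSpace

/-!
Since `F = V (W H Eᵀ)ᵀ` and `Vᵀ V = I`, we get `Fᵀ V = W H Eᵀ`, so the Arnoldi relation
becomes `(A - F)ᵀ V = V T`: the range of `V` is exactly invariant under `(A - F)ᵀ`.
Together with `Cᵀ = V G`, this lets every term of the Riccati right-hand side at `V Y Vᵀ`
factor as `V (·) Vᵀ`, giving `V Ẏ Vᵀ`, which is the derivative of `Xₘ = V Y Vᵀ`.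
-/

namespace Matrix

variable {k m n p R 𝕜 : Type*} [Fintype k] [Fintype m] [Fintype n] [Fintype p]

theorem _root_.HasDerivAt.matrix_mul_mul_s4 [NontriviallyNormedField 𝕜] [CompleteSpace 𝕜]
    {Y : 𝕜 → Matrix m n 𝕜} {Y' : Matrix m n 𝕜} {t : 𝕜}
    (P : Matrix k m 𝕜) (Q : Matrix n p 𝕜) (hY : HasDerivAt Y Y' t) :
    HasDerivAt (fun x => P * Y x * Q) (P * Y' * Q) t :=
  (mulRightLinearMap k 𝕜 Q ∘ₗ mulLeftLinearMap n 𝕜 P).toContinuousLinearMap.hasFDerivAt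
    |>.comp_hasDerivAt t hY

theorem transpose_sub_mul_eq_of_mul_eq_add [CommRing R] [DecidableEq m] {A : Matrix n n R}
    {V : Matrix n m R} {T : Matrix m m R} {P : Matrix n m R} (hV : Vᵀ * V = 1)
    (hA : Aᵀ * V = V * T + P) :
    (A - V * Pᵀ)ᵀ * V = V * T := by
  rw [transpose_sub, Matrix.sub_mul, hA, transpose_mul, transpose_transpose, Matrix.mul_assoc, hV,
    Matrix.mul_one, add_sub_cancel_right]

theorem riccati_rhs_conj [CommRing R] {A : Matrix n n R} {V : Matrix n m R}
    {T : Matrix m m R} (hA : Aᵀ * V = V * T) (B : Matrix n p R) {C : Matrix k n R}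
    {G : Matrix m k R} (hC : Cᵀ = V * G) (Y : Matrix m m R) :
    Aᵀ * (V * Y * Vᵀ) + V * Y * Vᵀ * A - V * Y * Vᵀ * B * Bᵀ * (V * Y * Vᵀ) + Cᵀ * C =
      V * (T * Y + Y * Tᵀ - Y * (Vᵀ * B) * (Vᵀ * B)ᵀ * Y + G * Gᵀ) * Vᵀ := by
  have hA' : Vᵀ * A = Tᵀ * Vᵀ := by
    simpa only [transpose_mul, transpose_transpose] using congrArg transpose hA
  have hC' : C = Gᵀ * Vᵀ := by
    simpa only [transpose_mul, transpose_transpose] using congrArg transpose hC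
  calc Aᵀ * (V * Y * Vᵀ) + V * Y * Vᵀ * A - V * Y * Vᵀ * B * Bᵀ * (V * Y * Vᵀ) + Cᵀ * C
      = (Aᵀ * V) * Y * Vᵀ + V * Y * (Vᵀ * A)
          - V * (Y * (Vᵀ * B) * (Bᵀ * V) * Y) * Vᵀ + V * G * (Gᵀ * Vᵀ) := by
        rw [← hC', hC]; simp only [Matrix.mul_assoc]
    _ = V * (T * Y) * Vᵀ + V * (Y * Tᵀ) * Vᵀ
          - V * (Y * (Vᵀ * B) * (Vᵀ * B)ᵀ * Y) * Vᵀ + V * (G * Gᵀ) * Vᵀ := by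
        rw [hA, hA', transpose_mul, transpose_transpose]; simp only [Matrix.mul_assoc]
    _ = V * (T * Y + Y * Tᵀ - Y * (Vᵀ * B) * (Vᵀ * B)ᵀ * Y + G * Gᵀ) * Vᵀ := by
        simp only [Matrix.mul_add, Matrix.add_mul, Matrix.mul_sub, Matrix.sub_mul]

end Matrix

theorem approximate_solution_solves_perturbed_riccati_general
    {n l s q p : ℕ}
    (A : Matrix (Fin n) (Fin n) ℝ) (B : Matrix (Fin n) (Fin l) ℝ)
    (C : Matrix (Fin s) (Fin n) ℝ)
    (V : Matrix (Fin n) (Fin q) ℝ) (W : Matrix (Fin n) (Fin p) ℝ)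
    (hV : Vᵀ * V = 1)
    (T : Matrix (Fin q) (Fin q) ℝ)
    (E : Matrix (Fin q) (Fin p) ℝ)
    (H : Matrix (Fin p) (Fin p) ℝ)
    (hArnoldi : Aᵀ * V = V * T + W * H * Eᵀ)
    (G : Matrix (Fin q) (Fin s) ℝ) (hC : Cᵀ = V * G)
    (Bq : Matrix (Fin q) (Fin l) ℝ) (hBq : Bq = Vᵀ * B)
    (Y Y' : ℝ → Matrix (Fin q) (Fin q) ℝ)
    (hY : ∀ t, HasDerivAt Y (Y' t) t)
    (hode : ∀ t, Y' t = T * Y t + Y t * Tᵀ - Y t * Bq * Bqᵀ * Y t + G * Gᵀ)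
    (Xm : ℝ → Matrix (Fin n) (Fin n) ℝ) (hXm : ∀ t, Xm t = V * Y t * Vᵀ)
    (F : Matrix (Fin n) (Fin n) ℝ) (hF : F = V * E * Hᵀ * Wᵀ) :
    ∀ t, HasDerivAt Xm
      ((A - F)ᵀ * Xm t + Xm t * (A - F) - Xm t * B * Bᵀ * Xm t + Cᵀ * C) t := by
  have hF' : F = V * (W * H * Eᵀ)ᵀ := by
    simp only [hF, Matrix.transpose_mul, Matrix.transpose_transpose, Matrix.mul_assoc]
  have hinv : (A - F)ᵀ * V = V * T := hF' ▸ Matrix.transpose_sub_mul_eq_of_mul_eq_add hV hArnoldi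
  intro t
  rw [show Xm = fun x => V * Y x * Vᵀ from funext hXm, Matrix.riccati_rhs_conj hinv B hC, ← hBq, ← hode]
  exact (hY t).matrix_mul_mul_s4 V Vᵀ

/-- In the extended block Arnoldi setting, if `Y` solves the
projected differential Riccati equation, then `Xₘ(t) = V Y(t) Vᵀ` is an exact
solution of the differential Riccati equation perturbed by `F = V E Hᵀ Wᵀ`:
`Ẋₘ(t) = (A - F)ᵀ Xₘ(t) + Xₘ(t) (A - F) - Xₘ(t) B Bᵀ Xₘ(t) + Cᵀ C`. -/
theorem approximate_solution_solves_perturbed_riccati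
    {n l s q p : ℕ} (hpq : p ≤ q)
    (A : Matrix (Fin n) (Fin n) ℝ) (B : Matrix (Fin n) (Fin l) ℝ)
    (C : Matrix (Fin s) (Fin n) ℝ)
    (V : Matrix (Fin n) (Fin q) ℝ) (W : Matrix (Fin n) (Fin p) ℝ)
    (hV : Vᵀ * V = 1) (hW : Wᵀ * W = 1) (hVW : Vᵀ * W = 0)
    (T : Matrix (Fin q) (Fin q) ℝ) (hT : T = Vᵀ * Aᵀ * V)
    (E : Matrix (Fin q) (Fin p) ℝ)
    (hE : ∀ i j, E i j = if (i : ℕ) = q - p + (j : ℕ) then 1 else 0)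
    (H : Matrix (Fin p) (Fin p) ℝ)
    (hArnoldi : Aᵀ * V = V * T + W * H * Eᵀ)
    (G : Matrix (Fin q) (Fin s) ℝ) (hC : Cᵀ = V * G)
    (Bq : Matrix (Fin q) (Fin l) ℝ) (hBq : Bq = Vᵀ * B)
    (Y Y' : ℝ → Matrix (Fin q) (Fin q) ℝ)
    (hY : ∀ t, HasDerivAt Y (Y' t) t)
    (hode : ∀ t, Y' t = T * Y t + Y t * Tᵀ - Y t * Bq * Bqᵀ * Y t + G * Gᵀ)
    (Xm : ℝ → Matrix (Fin n) (Fin n) ℝ) (hXm : ∀ t, Xm t = V * Y t * Vᵀ)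
    (F : Matrix (Fin n) (Fin n) ℝ) (hF : F = V * E * Hᵀ * Wᵀ) :
    ∀ t, HasDerivAt Xm
      ((A - F)ᵀ * Xm t + Xm t * (A - F) - Xm t * B * Bᵀ * Xm t + Cᵀ * C) t :=
  approximate_solution_solves_perturbed_riccati_general A B C V W hV T E H hArnoldi G hC Bq hBq Y Y'
    hY hode Xm hXm F hF
end

section
/- Let $A$ be a real $n \times n$ matrix, $B$ a real $n \times \ell$ matrix, $C$ a real $s \times n$ matrix. Let $X : \mathbb{R} \to \mathbb{R}^{n \times n}$ be a differentiable solution of the differential Riccati equation $\dot{X}(t) = A^T X(t) + X(t) A - X(t) B B^T X(t) + C^T C$, and let $X_m : \mathbb{R} \to \mathbb{R}^{n \times n}$ be any differentiable matrix function with residual $R_m(t) = \dot{X}_m(t) - A^T X_m(t) - X_m(t) A + X_m(t) B B^T X_m(t) - C^T C$. Then the error $E_m(t) = X(t) - X_m(t)$ satisfies, for every $t$, the differential equation $\dot{E}_m(t) = (A^T - X(t) B B^T) E_m(t) + E_m(t) (A - B B^T X(t)) + E_m(t) B B^T E_m(t) - R_m(t)$. -/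
open scoped Matrix

attribute [local instance] Matrix.normedAddCommGroup Matrix.normedSpace

theorem riccati_rhs_sub {R : Type*} [Ring R] (a a' k q x y : R) :
    (a' * x + x * a - x * k * x + q) - (a' * y + y * a - y * k * y + q) =
      (a' - x * k) * (x - y) + (x - y) * (a - k * x) + (x - y) * k * (x - y) := by
  noncomm_ring

/-- If `X` solves the differential Riccati equation
`Ẋ = Aᵀ X + X A - X B Bᵀ X + Cᵀ C` and `Xₘ` is any differentiable matrix
function with residual `Rₘ(t) = Ẋₘ(t) - Aᵀ Xₘ(t) - Xₘ(t) A + Xₘ(t) B Bᵀ Xₘ(t) - Cᵀ C`,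
then the error `Eₘ = X - Xₘ` satisfies
`Ėₘ = (Aᵀ - X B Bᵀ) Eₘ + Eₘ (A - B Bᵀ X) + Eₘ B Bᵀ Eₘ - Rₘ`. -/
theorem error_equation_riccati
    {n l s : ℕ}
    (A : Matrix (Fin n) (Fin n) ℝ) (B : Matrix (Fin n) (Fin l) ℝ)
    (C : Matrix (Fin s) (Fin n) ℝ)
    (X X' : ℝ → Matrix (Fin n) (Fin n) ℝ)
    (hX : ∀ t, HasDerivAt X (X' t) t)
    (hXode : ∀ t, X' t = Aᵀ * X t + X t * A - X t * B * Bᵀ * X t + Cᵀ * C)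
    (Xm Xm' : ℝ → Matrix (Fin n) (Fin n) ℝ)
    (hXm : ∀ t, HasDerivAt Xm (Xm' t) t)
    (Rm : ℝ → Matrix (Fin n) (Fin n) ℝ)
    (hRm : ∀ t, Rm t =
      Xm' t - Aᵀ * Xm t - Xm t * A + Xm t * B * Bᵀ * Xm t - Cᵀ * C)
    (Em : ℝ → Matrix (Fin n) (Fin n) ℝ)
    (hEm : ∀ t, Em t = X t - Xm t) :
    ∀ t, HasDerivAt Em
      ((Aᵀ - X t * B * Bᵀ) * Em t + Em t * (A - B * Bᵀ * X t)
        + Em t * B * Bᵀ * Em t - Rm t) t := by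
  intro t
  have hBBt : ∀ M : Matrix (Fin n) (Fin n) ℝ, M * B * Bᵀ = M * (B * Bᵀ) :=
    fun M => Matrix.mul_assoc M B Bᵀ
  have hXm' : Xm' t = Aᵀ * Xm t + Xm t * A - Xm t * (B * Bᵀ) * Xm t + Cᵀ * C + Rm t := by
    rw [hRm, hBBt]
    abel
  have hderiv : X' t - Xm' t = (Aᵀ - X t * B * Bᵀ) * Em t + Em t * (A - B * Bᵀ * X t)
      + Em t * B * Bᵀ * Em t - Rm t := by
    simp only [hXode, hXm', hEm, hBBt]
    rw [sub_add_eq_sub_sub, riccati_rhs_sub]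
  rw [← hderiv, funext hEm]
  exact (hX t).sub (hXm t)
end

section
/- Let $A$ be a real $n \times n$ matrix, $B$ a real $n \times \ell$ matrix, $C$ a real $s \times n$ matrix, and let $X_0$ be a real symmetric $n \times n$ matrix. Suppose $\widetilde{X}$ is a real symmetric $n \times n$ matrix solving the algebraic Riccati equation $A^T \widetilde{X} + \widetilde{X} A - \widetilde{X} B B^T \widetilde{X} + C^T C = 0$, set $\widetilde{A} = A - B B^T \widetilde{X}$, and suppose $\widetilde{Z}$ is a real symmetric $n \times n$ matrix solving the Lyapunov equation $\widetilde{A} \widetilde{Z} + \widetilde{Z} \widetilde{A}^T - B B^T = 0$. Assume $X_0 - \widetilde{X}$ is invertible, and for $t \in \mathbb{R}$ define $M(t) = e^{t \widetilde{A}}\, \widetilde{Z}\, e^{t \widetilde{A}^T} + (X_0 - \widetilde{X})^{-1} - \widetilde{Z}$; assume $M(t)$ is invertible for all $t$ in an interval $[0, T_f]$. Then the matrix function $X(t) = \widetilde{X} + e^{t \widetilde{A}^T}\, M(t)^{-1}\, e^{t \widetilde{A}}$ satisfies $X(0) = X_0$ and is a solution of the differential Riccati equation: for every $t \in [0, T_f]$,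 $\dot{X}(t) = A^T X(t) + X(t) A - X(t) B B^T X(t) + C^T C$. -/
/-!
Write `Y(t) = e^{tÃᵀ} M(t)⁻¹ e^{tÃ}`. The Lyapunov equation makes `Ṁ = e^{tÃ} B Bᵀ e^{tÃᵀ}`,
so differentiating the inverse gives `Ẏ = Ãᵀ Y + Y Ã - Y B Bᵀ Y`: `Y` solves the homogeneous
Riccati equation of the closed-loop matrix `Ã`. Since `X̃` solves the algebraic Riccati equation
and `Ãᵀ = Aᵀ - X̃ B Bᵀ`, shifting by `X̃` turns this into the original Riccati equation for
`X = X̃ + Y`. At `t = 0`, `M(0) = (X₀ - X̃)⁻¹`, so `X(0) = X₀`.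
-/

open scoped Matrix
open NormedSpace

/-- For matrices, `F = Aᵀ`, `G = B Bᵀ` and `Q = Cᵀ C`. -/
def riccati {R : Type*} [Ring R] (F A G Q X : R) : R :=
  F * X + X * A - X * G * X + Q

theorem riccati_add {R : Type*} [Ring R] {F A G Q X : R} (hX : riccati F A G Q X = 0) (Y : R) :
    riccati F A G Q (X + Y) = riccati (F - X * G) (A - G * X) G 0 Y := by
  have h : riccati F A G Q (X + Y) = riccati F A G Q X + riccati (F - X * G) (A - G * X) G 0 Y := by
    unfold riccati
    noncomm_ring
  rw [h, hX, zero_add]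

theorem HasDerivAt.ringInverse {𝕜 R : Type*} [NontriviallyNormedField 𝕜] [NormedRing R]
    [HasSummableGeomSeries R] [NormedAlgebra 𝕜 R] {M : 𝕜 → R} {M' : R} {t : 𝕜}
    (hM : HasDerivAt M M' t) (ht : IsUnit (M t)) :
    HasDerivAt (fun u => Ring.inverse (M u))
      (-(Ring.inverse (M t) * M' * Ring.inverse (M t))) t := by
  obtain ⟨u, hu⟩ := ht
  have hInv : HasFDerivAt Ring.inverse (-ContinuousLinearMap.mulLeftRight 𝕜 R ↑u⁻¹ ↑u⁻¹) (M t) :=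
    hu ▸ hasFDerivAt_ringInverse u
  rw [← hu, Ring.inverse_unit]
  exact hInv.comp_hasDerivAt t hM

section Exponential

variable {𝕂 𝔸 : Type*} [RCLike 𝕂] [NormedRing 𝔸] [NormedAlgebra 𝕂 𝔸] [CompleteSpace 𝔸]

theorem hasDerivAt_exp_smul_mul_mul_exp_smul (P Z Q : 𝔸) (t : 𝕂) :
    HasDerivAt (fun u : 𝕂 => exp (u • P) * Z * exp (u • Q))
      (exp (t • P) * (P * Z + Z * Q) * exp (t • Q)) t := by
  refine (((hasDerivAt_exp_smul_const P t).mul_const Z).mul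
    (hasDerivAt_exp_smul_const' Q t)).congr_deriv ?_
  noncomm_ring

theorem hasDerivAt_exp_smul_mul_inverse_mul_exp_smul {P Q Z K G : 𝔸} (hG : P * Z + Z * Q = G)
    {t : 𝕂} (ht : IsUnit (exp (t • P) * Z * exp (t • Q) + K)) :
    HasDerivAt
      (fun u : 𝕂 => exp (u • Q) * Ring.inverse (exp (u • P) * Z * exp (u • Q) + K) * exp (u • P))
      (riccati Q P G 0
        (exp (t • Q) * Ring.inverse (exp (t • P) * Z * exp (t • Q) + K) * exp (t • P))) t := by
  subst hG
  have hInv := ((hasDerivAt_exp_smul_mul_mul_exp_smul P Z Q t).add_const K).ringInverse ht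
  refine (((hasDerivAt_exp_smul_const' Q t).mul hInv).mul
    (hasDerivAt_exp_smul_const P t)).congr_deriv ?_
  simp only [Pi.mul_apply, riccati]
  noncomm_ring

end Exponential

theorem riccati_closed_form_solution_general
    {n l s : ℕ}
    (A : Matrix (Fin n) (Fin n) ℝ) (B : Matrix (Fin n) (Fin l) ℝ)
    (C : Matrix (Fin s) (Fin n) ℝ)
    (X0 : Matrix (Fin n) (Fin n) ℝ)
    (Xt : Matrix (Fin n) (Fin n) ℝ) (hXt : Xtᵀ = Xt)
    (hare : Aᵀ * Xt + Xt * A - Xt * B * Bᵀ * Xt + Cᵀ * C = 0)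
    (At : Matrix (Fin n) (Fin n) ℝ) (hAt : At = A - B * Bᵀ * Xt)
    (Zt : Matrix (Fin n) (Fin n) ℝ)
    (hlyap : At * Zt + Zt * Atᵀ - B * Bᵀ = 0)
    (hinv : IsUnit (X0 - Xt))
    (Tf : ℝ)
    (M : ℝ → Matrix (Fin n) (Fin n) ℝ)
    (hM : ∀ t, M t = NormedSpace.exp (t • At) * Zt * NormedSpace.exp (t • Atᵀ)
        + (X0 - Xt)⁻¹ - Zt)
    (hMinv : ∀ t ∈ Set.Icc (0 : ℝ) Tf, IsUnit (M t))
    (X : ℝ → Matrix (Fin n) (Fin n) ℝ)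
    (hX : ∀ t, X t = Xt + NormedSpace.exp (t • Atᵀ) * (M t)⁻¹ * NormedSpace.exp (t • At)) :
    X 0 = X0 ∧
      ∀ t ∈ Set.Icc (0 : ℝ) Tf,
        HasDerivAt X (Aᵀ * X t + X t * A - X t * B * Bᵀ * X t + Cᵀ * C) t := by
  refine ⟨?_, fun t ht => ?_⟩
  · have hM0 : M 0 = (X0 - Xt)⁻¹ := by simp [hM 0]
    rw [hX 0, hM0, Matrix.nonsing_inv_nonsing_inv _ ((Matrix.isUnit_iff_isUnit_det _).mp hinv)]
    simp
  have hMt : IsUnit (exp (t • At) * Zt * exp (t • Atᵀ) + ((X0 - Xt)⁻¹ - Zt)) := by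
    simpa only [hM, add_sub_assoc] using hMinv t ht
  have hXfun : X = fun u => Xt + exp (u • Atᵀ) *
      Ring.inverse (exp (u • At) * Zt * exp (u • Atᵀ) + ((X0 - Xt)⁻¹ - Zt)) * exp (u • At) :=
    funext fun u => by rw [hX u, hM u, add_sub_assoc, Matrix.nonsing_inv_eq_ringInverse]
  have hAtT : Atᵀ = Aᵀ - Xt * (B * Bᵀ) := by
    simp [hAt, Matrix.transpose_mul, hXt, Matrix.mul_assoc]
  have hare' : riccati Aᵀ A (B * Bᵀ) (Cᵀ * C) Xt = 0 := by
    simpa only [riccati, Matrix.mul_assoc] using hare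
  rw [hXfun]
  open scoped Matrix.Norms.Operator in
  refine ((hasDerivAt_exp_smul_mul_inverse_mul_exp_smul (sub_eq_zero.mp hlyap) hMt).const_add
    Xt).congr_deriv ?_
  rw [hAtT, hAt, ← riccati_add hare']
  simp only [riccati, Matrix.mul_assoc]
  -- the two sides differ only in the (definitionally equal) matrix norm instances
  rfl

/-- Closed-form solution of the differential Riccati
equation: if `X̃` solves the algebraic Riccati equation, `Ã = A - B Bᵀ X̃`,
`Z̃` solves the Lyapunov equation `Ã Z̃ + Z̃ Ãᵀ - B Bᵀ = 0`, `X₀ - X̃` is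
invertible, and `M(t) = e^{tÃ} Z̃ e^{tÃᵀ} + (X₀ - X̃)⁻¹ - Z̃` is invertible on
`[0, T_f]`, then `X(t) = X̃ + e^{tÃᵀ} M(t)⁻¹ e^{tÃ}` satisfies `X(0) = X₀` and
solves the differential Riccati equation on `[0, T_f]`. -/
theorem riccati_closed_form_solution
    {n l s : ℕ}
    (A : Matrix (Fin n) (Fin n) ℝ) (B : Matrix (Fin n) (Fin l) ℝ)
    (C : Matrix (Fin s) (Fin n) ℝ)
    (X0 : Matrix (Fin n) (Fin n) ℝ) (hX0 : X0ᵀ = X0)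
    (Xt : Matrix (Fin n) (Fin n) ℝ) (hXt : Xtᵀ = Xt)
    (hare : Aᵀ * Xt + Xt * A - Xt * B * Bᵀ * Xt + Cᵀ * C = 0)
    (At : Matrix (Fin n) (Fin n) ℝ) (hAt : At = A - B * Bᵀ * Xt)
    (Zt : Matrix (Fin n) (Fin n) ℝ) (hZt : Ztᵀ = Zt)
    (hlyap : At * Zt + Zt * Atᵀ - B * Bᵀ = 0)
    (hinv : IsUnit (X0 - Xt))
    (Tf : ℝ) (hTf : 0 < Tf)
    (M : ℝ → Matrix (Fin n) (Fin n) ℝ)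
    (hM : ∀ t, M t = NormedSpace.exp (t • At) * Zt * NormedSpace.exp (t • Atᵀ)
        + (X0 - Xt)⁻¹ - Zt)
    (hMinv : ∀ t ∈ Set.Icc (0 : ℝ) Tf, IsUnit (M t))
    (X : ℝ → Matrix (Fin n) (Fin n) ℝ)
    (hX : ∀ t, X t = Xt + NormedSpace.exp (t • Atᵀ) * (M t)⁻¹ * NormedSpace.exp (t • At)) :
    X 0 = X0 ∧
      ∀ t ∈ Set.Icc (0 : ℝ) Tf,
        HasDerivAt X (Aᵀ * X t + X t * A - X t * B * Bᵀ * X t + Cᵀ * C) t :=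
  riccati_closed_form_solution_general A B C X0 Xt hXt hare At hAt Zt hlyap hinv Tf M hM hMinv X hX
end
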